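/- For every integer p ≥ m+1 ≥ 2, Σ_{q=m}^{p−1} Σ_{r=1}^{q} (r−1)! · C(p−1, r−1) · C(q−1, r−1) · √((p+q−2r)!) ≤ (p−1)! · (p−1)^{3/2} · C(2(p−1), p−1), and consequently this double sum is bounded by K · (p−1)! · (2+ε)^{2p} for any ε > 0 and some constant K = K(ε). -/

import Mathlib

open Real

noncomputable def doubleSum (m p : ℕ) : ℝ :=
  ∑ q ∈ Finset.Icc m (p - 1), ∑ r ∈ Finset.Icc 1 q,
    (Nat.factorial (r - 1) : ℝ) * (Nat.choose (p - 1) (r - 1) : ℝ) *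
      (Nat.choose (q - 1) (r - 1) : ℝ) * Real.sqrt (Nat.factorial (p + q - 2 * r))

/-!
Write `n = p - 1`. Since `(r-1)! C(n, r-1) (n-r+1)! = n!` and
`(p+q-2r)! ≤ (2(p-r))! = ((p-r)!)² C(2(p-r), p-r)`, each summand is at most
`C(q-1, r-1) n! √C(2n, n)`. Summing over `r` gives a factor `2^(q-1) ≤ 2^(n-1)`, and
`4^n ≤ 2n C(2n, n)` turns `2^(n-1) √C(2n, n)` into `√n C(2n, n)`; the at most `n` values of `q`
supply the remaining factor `n`. The second bound follows from `C(2n, n) ≤ 4^n` and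
`n² = O(c^n)` for every `c > 1`.
-/

open Nat Finset

theorem sqrt_factorial_two_mul (k : ℕ) :
    √((2 * k)! : ℝ) = k ! * √(centralBinom k : ℝ) := by
  have h : ((2 * k)! : ℝ) = (k ! : ℝ) ^ 2 * centralBinom k := by
    rw [centralBinom_eq_two_mul_choose, two_mul, ← add_choose_mul_factorial_mul_factorial]
    push_cast
    ring
  rw [h, sqrt_mul (by positivity), sqrt_sq (by positivity)]

theorem factorial_mul_choose_mul_sqrt_factorial_le {n q r : ℕ} (hr : 1 ≤ r) (hrq : r ≤ q)
    (hqn : q ≤ n + 1) :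
    ((r - 1)! : ℝ) * n.choose (r - 1) * √((n + 1 + q - 2 * r)! : ℝ) ≤
      n ! * √(centralBinom n : ℝ) := by
  set k := n + 1 - r
  have hfact : ((r - 1)! : ℝ) * n.choose (r - 1) * k ! = n ! := by
    have h := choose_mul_factorial_mul_factorial (show r - 1 ≤ n by omega)
    rw [show n - (r - 1) = k by omega] at h
    rw [← h]
    push_cast
    ring
  have hsqrt : √((n + 1 + q - 2 * r)! : ℝ) ≤ k ! * √(centralBinom n : ℝ) :=
    calc √((n + 1 + q - 2 * r)! : ℝ)
        ≤ √((2 * k)! : ℝ) := sqrt_le_sqrt (by exact_mod_cast factorial_le (by omega))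
      _ = k ! * √(centralBinom k : ℝ) := sqrt_factorial_two_mul k
      _ ≤ k ! * √(centralBinom n : ℝ) := by
        gcongr
        exact centralBinom_strictMono.monotone (by omega)
  calc ((r - 1)! : ℝ) * n.choose (r - 1) * √((n + 1 + q - 2 * r)! : ℝ)
      ≤ ((r - 1)! : ℝ) * n.choose (r - 1) * (k ! * √(centralBinom n : ℝ)) := by gcongr
    _ = n ! * √(centralBinom n : ℝ) := by rw [← hfact]; ring

theorem sum_Icc_one_choose_pred {q : ℕ} (hq : 1 ≤ q) :
    ∑ r ∈ Icc 1 q, (q - 1).choose (r - 1) = 2 ^ (q - 1) := by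
  obtain ⟨j, rfl⟩ : ∃ j, q = j + 1 := ⟨q - 1, by omega⟩
  rw [← Ico_add_one_right_eq_Icc, sum_Ico_eq_sum_range]
  simp [Nat.sum_range_choose]

theorem two_pow_pred_mul_sqrt_centralBinom_le {n : ℕ} (hn : 1 ≤ n) :
    (2 : ℝ) ^ (n - 1) * √(centralBinom n : ℝ) ≤ √n * centralBinom n := by
  have h4 : (4 : ℝ) ^ (n - 1) ≤ n * centralBinom n := by
    have h : (4 : ℝ) ^ (n - 1) * 4 ≤ 2 * n * centralBinom n := by
      rw [← pow_succ, Nat.sub_add_cancel hn]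
      exact_mod_cast four_pow_le_two_mul_self_mul_centralBinom n hn
    linarith [show (0 : ℝ) ≤ n * centralBinom n by positivity]
  refine le_of_pow_le_pow_left₀ two_ne_zero (by positivity) ?_
  calc ((2 : ℝ) ^ (n - 1) * √(centralBinom n : ℝ)) ^ 2
      = 4 ^ (n - 1) * centralBinom n := by
        rw [mul_pow, sq_sqrt (by positivity), ← pow_mul, mul_comm (n - 1) 2, pow_mul]
        norm_num
    _ ≤ n * centralBinom n * centralBinom n := by gcongr
    _ = (√n * centralBinom n) ^ 2 := by rw [mul_pow, sq_sqrt (by positivity)]; ring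

theorem doubleSum_inner_le {n q : ℕ} (hq : 1 ≤ q) (hqn : q ≤ n) :
    ∑ r ∈ Icc 1 q, ((r - 1)! : ℝ) * n.choose (r - 1) * (q - 1).choose (r - 1) *
        √((n + 1 + q - 2 * r)! : ℝ) ≤
      n ! * (√n * centralBinom n) :=
  calc ∑ r ∈ Icc 1 q, ((r - 1)! : ℝ) * n.choose (r - 1) * (q - 1).choose (r - 1) *
        √((n + 1 + q - 2 * r)! : ℝ)
      ≤ ∑ r ∈ Icc 1 q, ((q - 1).choose (r - 1) : ℝ) * (n ! * √(centralBinom n : ℝ)) := by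
        refine sum_le_sum fun r hr => ?_
        rw [mem_Icc] at hr
        rw [mul_right_comm _ ((q - 1).choose (r - 1) : ℝ),
          mul_comm _ ((q - 1).choose (r - 1) : ℝ)]
        exact mul_le_mul_of_nonneg_left
          (factorial_mul_choose_mul_sqrt_factorial_le hr.1 hr.2 (by omega)) (by positivity)
    _ = 2 ^ (q - 1) * (n ! * √(centralBinom n : ℝ)) := by
        rw [← sum_mul, ← Nat.cast_sum, sum_Icc_one_choose_pred hq]
        norm_cast
    _ ≤ 2 ^ (n - 1) * (n ! * √(centralBinom n : ℝ)) := by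
        gcongr
        norm_num
    _ = n ! * (2 ^ (n - 1) * √(centralBinom n : ℝ)) := by ring
    _ ≤ n ! * (√n * centralBinom n) :=
        mul_le_mul_of_nonneg_left (two_pow_pred_mul_sqrt_centralBinom_le (by omega))
          (by positivity)

theorem doubleSum_succ_le {m : ℕ} (hm : 1 ≤ m) (n : ℕ) :
    doubleSum m (n + 1) ≤ n ! * (n * √n * centralBinom n) :=
  calc doubleSum m (n + 1)
      ≤ ∑ _q ∈ Icc m n, (n ! : ℝ) * (√n * centralBinom n) := by
        simp only [doubleSum, Nat.add_sub_cancel]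
        gcongr with q hq
        rw [mem_Icc] at hq
        exact doubleSum_inner_le (by omega) hq.2
    _ = #(Icc m n) * ((n ! : ℝ) * (√n * centralBinom n)) := by
        rw [sum_const, nsmul_eq_mul]
    _ ≤ n * ((n ! : ℝ) * (√n * centralBinom n)) := by
        gcongr
        rw [Nat.card_Icc]
        omega
    _ = n ! * (n * √n * centralBinom n) := by ring

theorem rpow_three_halves_eq_mul_sqrt {x : ℝ} (hx : 0 ≤ x) : x ^ ((3 : ℝ) / 2) = x * √x := by
  rw [sqrt_eq_rpow, show (3 : ℝ) / 2 = 1 + 1 / 2 by norm_num, rpow_add' hx (by norm_num),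
    rpow_one]

theorem doubleSum_le {m p : ℕ} (hm : 1 ≤ m) (hp : 1 ≤ p) :
    doubleSum m p ≤
      (p - 1)! * ((p : ℝ) - 1) ^ ((3 : ℝ) / 2) * (2 * (p - 1)).choose (p - 1) := by
  obtain ⟨n, rfl⟩ : ∃ n, p = n + 1 := ⟨p - 1, by omega⟩
  have hcast : ((n + 1 : ℕ) : ℝ) - 1 = n := by push_cast; ring
  rw [Nat.add_sub_cancel, hcast, rpow_three_halves_eq_mul_sqrt n.cast_nonneg,
    ← centralBinom_eq_two_mul_choose, mul_assoc]
  exact doubleSum_succ_le hm n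

theorem exists_sq_le_mul_pow {c : ℝ} (hc : 1 < c) :
    ∃ K > 0, ∀ n : ℕ, (n : ℝ) ^ 2 ≤ K * c ^ n := by
  obtain ⟨K, hK⟩ := (tendsto_pow_const_div_const_pow_of_one_lt 2 hc).bddAbove_range
  refine ⟨max K 1, by positivity, fun n => ?_⟩
  have h := hK (Set.mem_range_self n)
  rw [div_le_iff₀ (by positivity)] at h
  exact h.trans (by gcongr; exact le_max_left K 1)

theorem exists_doubleSum_le_mul_pow {ε : ℝ} (hε : 0 < ε) :
    ∃ K > 0, ∀ m p : ℕ, 1 ≤ m → 1 ≤ p →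
      doubleSum m p ≤ K * (p - 1)! * (2 + ε) ^ (2 * p) := by
  obtain ⟨K, hK, hsq⟩ := exists_sq_le_mul_pow (c := (2 + ε) ^ 2 / 4) (by nlinarith)
  refine ⟨K, hK, fun m p hm hp => ?_⟩
  obtain ⟨n, rfl⟩ : ∃ n, p = n + 1 := ⟨p - 1, by omega⟩
  have hsqrt : √(n : ℝ) ≤ n := by
    rcases Nat.eq_zero_or_pos n with rfl | hn
    · simp
    · exact sqrt_le_self_iff.mpr (Or.inr (by exact_mod_cast hn))
  calc doubleSum m (n + 1)
      ≤ n ! * (n * √n * centralBinom n) := doubleSum_succ_le hm n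
    _ ≤ n ! * (n ^ 2 * 4 ^ n) := by
        rw [sq]
        gcongr
        exact_mod_cast centralBinom_le_four_pow n
    _ ≤ n ! * (K * ((2 + ε) ^ 2 / 4) ^ n * 4 ^ n) := by gcongr; exact hsq n
    _ = K * n ! * (2 + ε) ^ (2 * n) := by rw [div_pow, pow_mul]; field_simp
    _ ≤ K * (n + 1 - 1)! * (2 + ε) ^ (2 * (n + 1)) := by
        rw [Nat.add_sub_cancel]
        gcongr
        · linarith
        · omega

theorem stmt_19 :
    (∀ m p : ℕ, 1 ≤ m → m + 1 ≤ p →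
      doubleSum m p ≤ (Nat.factorial (p - 1) : ℝ) *
        ((p : ℝ) - 1) ^ ((3 : ℝ) / 2) * (Nat.choose (2 * (p - 1)) (p - 1) : ℝ)) ∧
    (∀ ε : ℝ, 0 < ε → ∃ K : ℝ, 0 < K ∧ ∀ m p : ℕ, 1 ≤ m → m + 1 ≤ p →
      doubleSum m p ≤ K * (Nat.factorial (p - 1) : ℝ) * (2 + ε) ^ (2 * p)) := by
  refine ⟨fun m p hm hmp => doubleSum_le hm (by omega), fun ε hε => ?_⟩
  obtain ⟨K, hK, hbound⟩ := exists_doubleSum_le_mul_pow hε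
  exact ⟨K, hK, fun m p hm hmp => hbound m p hm (by omega)⟩
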